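/- arXiv:2410.16195 — 3 statements merged into one kernel-verified Lean document; each statement's English description precedes it below -/
import Mathlib

section
/- Under the same setting, if the direction V lies in a product of local RKHSs H₁ × … × H_D with kernels k_a, then the directional derivative DJ[0](V) equals ∑_{a=1}^D ⟨−E_{z∼q}[k_a(z,·) ∂_{z_a} log p(z) + ∂_{z_a} k_a(z,·)], v_a⟩_{H_a}, so the functional gradient of J at 0 has a-th component (∇J[0](·))_a = −E_{z∼q}[k_a(z,·) ∂_{z_a} log p(z) + ∂_{z_a} k_a(z,·)]. -/
open MeasureTheory RealInnerProductSpace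

/-!
Each summand of the first variation is a Stein operator applied to `v_a`. By the reproducing
properties it is the inner product of `v_a` with the Stein kernel `s_a(z) k_a(z,·) + ∂_{z_a} k_a(z,·)`,
and since integration commutes with the continuous linear functional `⟪·, v_a⟫`, the expectation
may be moved inside the inner product.
-/

section

variable {X : Type*} [MeasurableSpace X] {q : Measure X}

theorem real_inner_smul_add_left {E : Type*} [NormedAddCommGroup E] [InnerProductSpace ℝ E]
    (c : ℝ) (k kd v : E) : ⟪c • k + kd, v⟫ = c * ⟪k, v⟫ + ⟪kd, v⟫ := by
  rw [inner_add_left, real_inner_smul_left]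

theorem integral_inner_const {E : Type*} [NormedAddCommGroup E] [InnerProductSpace ℝ E]
    [CompleteSpace E] {f : X → E} (hf : Integrable f q) (v : E) :
    ∫ z, ⟪f z, v⟫ ∂q = ⟪∫ z, f z ∂q, v⟫ := by
  simp_rw [real_inner_comm v]
  exact integral_inner hf v

theorem integral_sum_inner_const {ι : Type*} (t : Finset ι) {E : ι → Type*}
    [∀ i, NormedAddCommGroup (E i)] [∀ i, InnerProductSpace ℝ (E i)] [∀ i, CompleteSpace (E i)]
    {f : (i : ι) → X → E i} (hf : ∀ i, Integrable (f i) q) (v : (i : ι) → E i) :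
    ∫ z, ∑ i ∈ t, ⟪f i z, v i⟫ ∂q = ∑ i ∈ t, ⟪∫ z, f i z ∂q, v i⟫ := by
  rw [integral_finsetSum t fun i _ => (hf i).inner_const (v i)]
  exact Finset.sum_congr rfl fun i _ => integral_inner_const (hf i) (v i)

end

theorem stein_functional_gradient_local_kernels_general (D : ℕ)
    (X : Type*) [MeasurableSpace X]
    (q : Measure X)
    -- the local RKHSs
    (H : Fin D → Type*) [∀ a, NormedAddCommGroup (H a)]
    [∀ a, InnerProductSpace ℝ (H a)] [∀ a, CompleteSpace (H a)]
    -- evaluation of f ∈ H_a at z, and its partial derivative ∂_{z_a} at z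
    (ev : (a : Fin D) → H a → X → ℝ) (evd : (a : Fin D) → H a → X → ℝ)
    -- representers k_a(z,·) and ∂_{z_a} k_a(z,·)
    (K : (a : Fin D) → X → H a) (Kd : (a : Fin D) → X → H a)
    -- reproducing properties
    (hrep : ∀ a (f : H a) z, ev a f z = ⟪K a z, f⟫)
    (hrepd : ∀ a (f : H a) z, evd a f z = ⟪Kd a z, f⟫)
    -- ∂_{z_a} log p(z)
    (s : Fin D → X → ℝ)
    -- the direction V = (v₁, …, v_D)
    (V : (a : Fin D) → H a)
    -- the first variation, as established previously
    (DJ0 : ((a : Fin D) → H a) → ℝ)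
    (hDJ0 : DJ0 V = -∫ z, (∑ a, (s a z * ev a (V a) z + evd a (V a) z)) ∂q)
    -- Bochner integrability (expectations commute with inner products)
    (hint : ∀ a, Integrable (fun z => s a z • K a z + Kd a z) q) :
    DJ0 V = ∑ a, ⟪-∫ z, (s a z • K a z + Kd a z) ∂q, V a⟫ := by
  simp_rw [hrep, hrepd, ← real_inner_smul_add_left] at hDJ0
  rw [hDJ0, integral_sum_inner_const Finset.univ hint V, ← Finset.sum_neg_distrib]
  simp_rw [inner_neg_left]

/-- In a product of local RKHSs H₁ × … × H_D, the first variation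
DJ[0](V) = −E_{z∼q}[∑_a ∂_{z_a} log p(z) v_a(z) + ∂_{z_a} v_a(z)] equals
∑_a ⟨g_a, v_a⟩ where g_a = −E_{z∼q}[k_a(z,·) ∂_{z_a} log p(z) + ∂_{z_a} k_a(z,·)];
i.e., the functional gradient of J at 0 has a-th component g_a. -/
theorem stein_functional_gradient_local_kernels (D : ℕ)
    (X : Type*) [MeasurableSpace X]
    (q : Measure X) [IsProbabilityMeasure q]
    -- the local RKHSs
    (H : Fin D → Type*) [∀ a, NormedAddCommGroup (H a)]
    [∀ a, InnerProductSpace ℝ (H a)] [∀ a, CompleteSpace (H a)]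
    -- evaluation of f ∈ H_a at z, and its partial derivative ∂_{z_a} at z
    (ev : (a : Fin D) → H a → X → ℝ) (evd : (a : Fin D) → H a → X → ℝ)
    -- representers k_a(z,·) and ∂_{z_a} k_a(z,·)
    (K : (a : Fin D) → X → H a) (Kd : (a : Fin D) → X → H a)
    -- reproducing properties
    (hrep : ∀ a (f : H a) z, ev a f z = ⟪K a z, f⟫)
    (hrepd : ∀ a (f : H a) z, evd a f z = ⟪Kd a z, f⟫)
    -- ∂_{z_a} log p(z)
    (s : Fin D → X → ℝ)
    -- the direction V = (v₁, …, v_D)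
    (V : (a : Fin D) → H a)
    -- the first variation, as established previously
    (DJ0 : ((a : Fin D) → H a) → ℝ)
    (hDJ0 : DJ0 V = -∫ z, (∑ a, (s a z * ev a (V a) z + evd a (V a) z)) ∂q)
    -- Bochner integrability (expectations commute with inner products)
    (hint : ∀ a, Integrable (fun z => s a z • K a z + Kd a z) q) :
    DJ0 V = ∑ a, ⟪-∫ z, (s a z • K a z + Kd a z) ∂q, V a⟫ :=
  stein_functional_gradient_local_kernels_general D X q H ev evd K Kd hrep hrepd s V DJ0 hDJ0 hint
end

section
/- The second variation of the Stein variational objective at 0 along directions V, W ∈ H₁ × … × H_D equals ∑_{a,b} ⟨⟨h_{ab}(x,y), w_b(y)⟩_{H_b}, v_a(x)⟩_{H_a}, where h_{ab}(x,y) = E_{z∼q}[−k_a(z,x) k_b(z,y) ∂²_{ab} log p(z) + ∂_{z_a} k_b(z,y) ∂_{z_b} k_a(z,x)]. -/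
/-!
Both sides are expectations over `z ∼ q`. Moving the inner products with `v_a` inside the Bochner
integrals turns the right-hand side into `E_z[∑_{a,b} …]`, and by the reproducing properties
each summand is the `(a, b)` term of `W(z)ᵀ ∇² log p(z) V(z) − trace(∇W(z) ∇V(z))`, up to sign
and the symmetry of the Hessian.
-/

open MeasureTheory RealInnerProductSpace

section IntegralInner

variable {X ι κ : Type*} [MeasurableSpace X] {μ : Measure X} [Fintype ι] [Fintype κ]
  {E : ι → Type*} [∀ a, NormedAddCommGroup (E a)] [∀ a, InnerProductSpace ℝ (E a)]
  [∀ a, CompleteSpace (E a)]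

theorem inner_integral_left {F : Type*} [NormedAddCommGroup F] [InnerProductSpace ℝ F]
    [CompleteSpace F] {f : X → F} (hf : Integrable f μ) (v : F) :
    ⟪∫ z, f z ∂μ, v⟫ = ∫ z, ⟪f z, v⟫ ∂μ := by
  simp only [real_inner_comm v]
  exact (integral_inner hf v).symm

theorem sum_sum_inner_integral {f : (a : ι) → κ → X → E a} (hf : ∀ a b, Integrable (f a b) μ)
    (v : (a : ι) → E a) :
    ∑ a, ∑ b, ⟪∫ z, f a b z ∂μ, v a⟫ = ∫ z, ∑ a, ∑ b, ⟪f a b z, v a⟫ ∂μ := by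
  have hf_inner : ∀ a b, Integrable (fun z => ⟪f a b z, v a⟫) μ :=
    fun a b => (hf a b).inner_const (v a)
  simp only [inner_integral_left (hf _ _)]
  rw [integral_finsetSum _ fun a _ => integrable_finsetSum _ fun b _ => hf_inner a b]
  exact Finset.sum_congr rfl fun a _ => (integral_finsetSum _ fun b _ => hf_inner a b).symm

end IntegralInner

theorem neg_hessian_sub_trace_eq_sum_inner {ι : Type*} [Fintype ι]
    {E : ι → Type*} [∀ a, NormedAddCommGroup (E a)] [∀ a, InnerProductSpace ℝ (E a)]
    (h : ι → ι → ℝ) (h_symm : ∀ a b, h a b = h b a)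
    (k : (a : ι) → E a) (kd : (b : ι) → (a : ι) → E a) (v w : (a : ι) → E a) :
    -((∑ a, ∑ b, ⟪k b, w b⟫ * h b a * ⟪k a, v a⟫) - ∑ a, ∑ b, ⟪kd a b, w b⟫ * ⟪kd b a, v a⟫) =
      ∑ a, ∑ b, ⟪(-(h a b) * ⟪k b, w b⟫) • k a + ⟪kd a b, w b⟫ • kd b a, v a⟫ := by
  rw [neg_sub, ← Finset.sum_sub_distrib]
  refine Finset.sum_congr rfl fun a _ => ?_
  rw [← Finset.sum_sub_distrib]
  refine Finset.sum_congr rfl fun b _ => ?_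
  rw [inner_add_left, real_inner_smul_left, real_inner_smul_left, h_symm b a]
  ring

theorem stein_second_variation_local_kernels_general (D : ℕ)
    (X : Type*) [MeasurableSpace X]
    (q : Measure X)
    (H : Fin D → Type*) [∀ a, NormedAddCommGroup (H a)]
    [∀ a, InnerProductSpace ℝ (H a)] [∀ a, CompleteSpace (H a)]
    -- evaluation of f ∈ H_a at z, and partial derivative ∂_{z_b} (ev a f) at z
    (ev : (a : Fin D) → H a → X → ℝ)
    (evd : (b : Fin D) → (a : Fin D) → H a → X → ℝ)
    -- representers: K a z = k_a(z,·) ∈ H_a, and Kd b a z = ∂_{z_b} k_a(z,·) ∈ H_a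
    (K : (a : Fin D) → X → H a)
    (Kd : (b : Fin D) → (a : Fin D) → X → H a)
    -- reproducing properties: v_a(z) = ⟨k_a(z,·), v_a⟩, ∂_{z_b} v_a(z) = ⟨∂_{z_b} k_a(z,·), v_a⟩
    (hrep : ∀ a (f : H a) z, ev a f z = ⟪K a z, f⟫)
    (hrepd : ∀ b a (f : H a) z, evd b a f z = ⟪Kd b a z, f⟫)
    -- hess a b z = ∂²_{ab} log p(z)
    (hess : Fin D → Fin D → X → ℝ)
    (hhess_symm : ∀ a b z, hess a b z = hess b a z)
    -- the directions V, W
    (V W : (a : Fin D) → H a)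
    -- the second variation, as established previously:
    -- D²J[0](V,W) = −E_{z∼q}[W(z)ᵀ ∇²_z log p(z) V(z) − trace(∇_z W(z) ∇_z V(z))]
    (D2J : ((a : Fin D) → H a) → ((a : Fin D) → H a) → ℝ)
    (hD2J : D2J V W =
      -∫ z, ((∑ a, ∑ b, ev b (W b) z * hess b a z * ev a (V a) z) -
             (∑ a, ∑ b, evd a b (W b) z * evd b a (V a) z)) ∂q)
    -- Bochner integrability (expectations commute with inner products)
    (hint : ∀ a b, Integrable
      (fun z => ((-(hess a b z)) * ⟪K b z, W b⟫) • K a z +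
        ⟪Kd a b z, W b⟫ • Kd b a z) q) :
    D2J V W = ∑ a, ∑ b,
      ⟪∫ z, (((-(hess a b z)) * ⟪K b z, W b⟫) • K a z +
          ⟪Kd a b z, W b⟫ • Kd b a z) ∂q, V a⟫ := by
  rw [hD2J, sum_sum_inner_integral hint, ← integral_neg]
  congr 1
  funext z
  simp only [hrep, hrepd]
  exact neg_hessian_sub_trace_eq_sum_inner (hess · · z) (hhess_symm · · z) (K · z) (Kd · · z) V W

/-- Second variation of the Stein variational objective in a product of local RKHSs:
D²J[0](V,W) = ∑_{a,b} ⟨⟨h_{ab}(x,y), w_b(y)⟩_{H_b}, v_a(x)⟩_{H_a} with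
h_{ab}(x,y) = E_{z∼q}[−k_a(z,x) k_b(z,y) ∂²_{ab} log p(z)
              + ∂_{z_a} k_b(z,y) ∂_{z_b} k_a(z,x)]. -/
theorem stein_second_variation_local_kernels (D : ℕ)
    (X : Type*) [MeasurableSpace X]
    (q : Measure X) [IsProbabilityMeasure q]
    (H : Fin D → Type*) [∀ a, NormedAddCommGroup (H a)]
    [∀ a, InnerProductSpace ℝ (H a)] [∀ a, CompleteSpace (H a)]
    -- evaluation of f ∈ H_a at z, and partial derivative ∂_{z_b} (ev a f) at z
    (ev : (a : Fin D) → H a → X → ℝ)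
    (evd : (b : Fin D) → (a : Fin D) → H a → X → ℝ)
    -- representers: K a z = k_a(z,·) ∈ H_a, and Kd b a z = ∂_{z_b} k_a(z,·) ∈ H_a
    (K : (a : Fin D) → X → H a)
    (Kd : (b : Fin D) → (a : Fin D) → X → H a)
    -- reproducing properties: v_a(z) = ⟨k_a(z,·), v_a⟩, ∂_{z_b} v_a(z) = ⟨∂_{z_b} k_a(z,·), v_a⟩
    (hrep : ∀ a (f : H a) z, ev a f z = ⟪K a z, f⟫)
    (hrepd : ∀ b a (f : H a) z, evd b a f z = ⟪Kd b a z, f⟫)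
    -- hess a b z = ∂²_{ab} log p(z)
    (hess : Fin D → Fin D → X → ℝ)
    (hhess_symm : ∀ a b z, hess a b z = hess b a z)
    -- the directions V, W
    (V W : (a : Fin D) → H a)
    -- the second variation, as established previously:
    -- D²J[0](V,W) = −E_{z∼q}[W(z)ᵀ ∇²_z log p(z) V(z) − trace(∇_z W(z) ∇_z V(z))]
    (D2J : ((a : Fin D) → H a) → ((a : Fin D) → H a) → ℝ)
    (hD2J : D2J V W =
      -∫ z, ((∑ a, ∑ b, ev b (W b) z * hess b a z * ev a (V a) z) -
             (∑ a, ∑ b, evd a b (W b) z * evd b a (V a) z)) ∂q)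
    -- Bochner integrability (expectations commute with inner products)
    (hint : ∀ a b, Integrable
      (fun z => ((-(hess a b z)) * ⟪K b z, W b⟫) • K a z +
        ⟪Kd a b z, W b⟫ • Kd b a z) q) :
    D2J V W = ∑ a, ∑ b,
      ⟪∫ z, (((-(hess a b z)) * ⟪K b z, W b⟫) • K a z +
          ⟪Kd a b z, W b⟫ • Kd b a z) ∂q, V a⟫ :=
  stein_second_variation_local_kernels_general D X q H ev evd K Kd hrep hrepd hess hhess_symm V W
    D2J hD2J hint
end

section
/- A vector w* with ‖w*‖₂ ≤ Δ is a global solution of the trust-region subproblem min_{‖w‖₂ ≤ Δ} gᵀw + ½ wᵀHw (H symmetric) if and only if there exists λ ≥ 0 such that (H + λI)w* = −g, H + λI is positive semidefinite, and λ(Δ − ‖w*‖₂) = 0. -/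
open Matrix Filter Topology Set

/-!
If `(H + λI) x = -g`, then
`m y - m x = ½ (y - x)ᵀ (H + λI) (y - x) + λ/2 (‖x‖² - ‖y‖²)`,
which gives sufficiency at once. Conversely, an interior minimizer is an unconstrained local
minimizer of the quadratic, so `λ = 0` works. For a minimizer `x` on the boundary, moving inward
along `-x` shows `(g + H x) ⬝ x ≤ 0`, which fixes `λ = -(g + H x) ⬝ x / ‖x‖² ≥ 0`. Comparing `x`
with its mirror images `x - 2 (v ⬝ x) / ‖v‖² v`, which lie on the same sphere, gives
`(v ⬝ x) ‖v‖² (g + H x + λ x) ⬝ v ≤ (v ⬝ x)² vᵀ (H + λI) v` for every `v`; letting `v` tend to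
vectors orthogonal to `x` yields first `g + H x + λ x = 0` and then that `H + λI` is positive
semidefinite.
-/

theorem Matrix.IsSymm.dotProduct_mulVec_comm {n α : Type*} [Fintype n] [CommSemiring α]
    {H : Matrix n n α} (hH : H.IsSymm) (x y : n → α) : x ⬝ᵥ H *ᵥ y = y ⬝ᵥ H *ᵥ x := by
  rw [dotProduct_mulVec, ← mulVec_transpose, hH.eq, dotProduct_comm]

theorem nonneg_of_eventually_nonneg_nhdsGT {f : ℝ → ℝ} (hf : ContinuousAt f 0)
    (h : ∀ᶠ t in 𝓝[>] 0, 0 ≤ f t) : 0 ≤ f 0 :=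
  ge_of_tendsto (hf.tendsto.mono_left nhdsWithin_le_nhds) h

theorem IsLocalMin.quadratic_coeffs {c a b : ℝ}
    (h : IsLocalMin (fun t : ℝ => c + a * t + b * t ^ 2) 0) : a = 0 ∧ 0 ≤ b := by
  have ha : a = 0 := h.hasDerivAt_eq_zero <| by
    apply HasDerivAt.congr_deriv (((hasDerivAt_id (0 : ℝ)).const_mul a |>.const_add c).add
      ((hasDerivAt_pow 2 (0 : ℝ)).const_mul b))
    simp
  subst ha
  obtain ⟨t, hmin, ht : t ≠ 0⟩ := ((h.filter_mono nhdsWithin_le_nhds).and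
    (self_mem_nhdsWithin (s := {0}ᶜ))).exists
  exact ⟨rfl, nonneg_of_mul_nonneg_left (by simpa using hmin) (sq_pos_of_ne_zero ht)⟩

section Reflection

variable {n : Type*} [Fintype n] {B : Matrix n n ℝ} {x : n → ℝ}

theorem eq_zero_of_forall_mul_dotProduct_le (hx : x ≠ 0) {s : n → ℝ} (hsx : s ⬝ᵥ x = 0)
    (h : ∀ v, (v ⬝ᵥ x) * (v ⬝ᵥ v) * (s ⬝ᵥ v) ≤ (v ⬝ᵥ x) ^ 2 * (v ⬝ᵥ B *ᵥ v)) : s = 0 := by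
  have hxx : 0 < x ⬝ᵥ x := by simpa using dotProduct_self_star_pos_iff.2 hx
  have hlim := nonneg_of_eventually_nonneg_nhdsGT (f := fun ε => (x ⬝ᵥ x) * ε *
      ((s + ε • x) ⬝ᵥ B *ᵥ (s + ε • x)) - (s ⬝ᵥ s + ε ^ 2 * (x ⬝ᵥ x)) * (s ⬝ᵥ s))
    (by fun_prop) <| eventually_nhdsWithin_of_forall fun ε (hε : 0 < ε) => by
      -- `h (s + ε • x)` divided by `ε * (x ⬝ᵥ x)`
      have := h (s + ε • x)
      simp only [add_dotProduct, dotProduct_add, smul_dotProduct, dotProduct_smul, smul_eq_mul,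
        hsx, dotProduct_comm x s] at this ⊢
      refine nonneg_of_mul_nonneg_right (a := ε * (x ⬝ᵥ x)) ?_ (by positivity)
      linarith
  have hss : s ⬝ᵥ s = 0 := by
    simp only [zero_smul, add_zero, zero_pow two_ne_zero, zero_mul, mul_zero] at hlim
    nlinarith
  exact dotProduct_self_eq_zero.1 hss

theorem posSemidef_of_forall_sq_dotProduct_mul_nonneg (hB : B.IsSymm) (hx : x ≠ 0)
    (h : ∀ v, 0 ≤ (v ⬝ᵥ x) ^ 2 * (v ⬝ᵥ B *ᵥ v)) : B.PosSemidef := by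
  refine .of_dotProduct_mulVec_nonneg (isHermitian_iff_isSymm.2 hB) fun v => ?_
  rw [star_trivial]
  have hxx : 0 < x ⬝ᵥ x := by simpa using dotProduct_self_star_pos_iff.2 hx
  rcases ne_or_eq (v ⬝ᵥ x) 0 with hvx | hvx
  · exact nonneg_of_mul_nonneg_right (h v) (by positivity)
  · have := nonneg_of_eventually_nonneg_nhdsGT
      (f := fun ε => (v + ε • x) ⬝ᵥ B *ᵥ (v + ε • x)) (by fun_prop) <|
      eventually_nhdsWithin_of_forall fun ε (hε : 0 < ε) => by
        have hvεx : (v + ε • x) ⬝ᵥ x = ε * (x ⬝ᵥ x) := by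
          simp [add_dotProduct, hvx]
        exact nonneg_of_mul_nonneg_right (h (v + ε • x)) (by rw [hvεx]; positivity)
    simpa using this

end Reflection

section QuadraticModel

variable {n : Type*} [Fintype n] {H : Matrix n n ℝ} {g : n → ℝ}

noncomputable def quadraticModel (H : Matrix n n ℝ) (g x : n → ℝ) : ℝ :=
  g ⬝ᵥ x + 1 / 2 * (x ⬝ᵥ H *ᵥ x)

theorem quadraticModel_add (hH : H.IsSymm) (x v : n → ℝ) :
    quadraticModel H g (x + v) =
      quadraticModel H g x + (g + H *ᵥ x) ⬝ᵥ v + 1 / 2 * (v ⬝ᵥ H *ᵥ v) := by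
  simp only [quadraticModel, mulVec_add, dotProduct_add, add_dotProduct]
  rw [hH.dotProduct_mulVec_comm x v, dotProduct_comm (H *ᵥ x) v]
  ring

theorem quadraticModel_add_smul (hH : H.IsSymm) (x v : n → ℝ) (t : ℝ) :
    quadraticModel H g (x + t • v) =
      quadraticModel H g x + (g + H *ᵥ x) ⬝ᵥ v * t + 1 / 2 * (v ⬝ᵥ H *ᵥ v) * t ^ 2 := by
  simp only [quadraticModel_add hH, mulVec_smul, dotProduct_smul, smul_dotProduct, smul_eq_mul]
  ring

theorem quadraticModel_sub_of_stationary [DecidableEq n] (hH : H.IsSymm) {lam : ℝ} {x : n → ℝ}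
    (hx : (H + lam • 1) *ᵥ x = -g) (y : n → ℝ) :
    quadraticModel H g y - quadraticModel H g x =
      1 / 2 * ((y - x) ⬝ᵥ (H + lam • 1) *ᵥ (y - x)) + lam / 2 * (x ⬝ᵥ x - y ⬝ᵥ y) := by
  obtain ⟨v, rfl⟩ : ∃ v, y = x + v := ⟨y - x, by abel⟩
  have hgrad : g + H *ᵥ x = -(lam • x) := by
    rw [add_mulVec, smul_mulVec, one_mulVec] at hx
    linear_combination (norm := module) hx
  simp only [quadraticModel_add hH, hgrad, add_sub_cancel_left, add_mulVec, smul_mulVec,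
    one_mulVec, dotProduct_add, add_dotProduct, neg_dotProduct, smul_dotProduct,
    dotProduct_smul, smul_eq_mul, dotProduct_comm v x]
  ring

theorem isMinOn_quadraticModel_of_multiplier [DecidableEq n] (hH : H.IsSymm) {lam ρ : ℝ}
    {x : n → ℝ} (hlam : 0 ≤ lam) (hstat : (H + lam • 1) *ᵥ x = -g)
    (hpsd : (H + lam • 1).PosSemidef) (hcompl : lam * (ρ - x ⬝ᵥ x) = 0) :
    IsMinOn (quadraticModel H g) {y | y ⬝ᵥ y ≤ ρ} x := fun y (hy : y ⬝ᵥ y ≤ ρ) => by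
  show quadraticModel H g x ≤ quadraticModel H g y
  have hq := hpsd.dotProduct_mulVec_nonneg (y - x)
  rw [star_trivial] at hq
  have := quadraticModel_sub_of_stationary hH hstat y
  nlinarith [mul_nonneg hlam (sub_nonneg.2 hy)]

theorem IsLocalMin.stationary_posSemidef_of_quadraticModel (hH : H.IsSymm) {x : n → ℝ}
    (h : IsLocalMin (quadraticModel H g) x) : H *ᵥ x = -g ∧ H.PosSemidef := by
  have hline (v : n → ℝ) : (g + H *ᵥ x) ⬝ᵥ v = 0 ∧ 0 ≤ 1 / 2 * (v ⬝ᵥ H *ᵥ v) := by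
    have h' : IsLocalMin (quadraticModel H g) (x + (0 : ℝ) • v) := by simpa using h
    have := h'.comp_continuous (g := fun t : ℝ => x + t • v) (by fun_prop)
    simp only [Function.comp_def, quadraticModel_add_smul hH] at this
    exact this.quadratic_coeffs
  have hgrad : g + H *ᵥ x = 0 := dotProduct_self_eq_zero.1 (hline _).1
  refine ⟨eq_neg_of_add_eq_zero_right hgrad, .of_dotProduct_mulVec_nonneg
    (isHermitian_iff_isSymm.2 hH) fun v => ?_⟩
  simpa using (hline v).2

theorem gradient_dotProduct_nonpos_of_isMinOn (hH : H.IsSymm) {x : n → ℝ}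
    (h : IsMinOn (quadraticModel H g) {y | y ⬝ᵥ y ≤ x ⬝ᵥ x} x) :
    (g + H *ᵥ x) ⬝ᵥ x ≤ 0 := by
  have hinward : ∀ t ∈ Ioo (0 : ℝ) 1,
      0 ≤ -((g + H *ᵥ x) ⬝ᵥ x) + 1 / 2 * (x ⬝ᵥ H *ᵥ x) * t := by
    rintro t ⟨ht0, ht1⟩
    have hmem : x + t • -x ∈ {y | y ⬝ᵥ y ≤ x ⬝ᵥ x} := by
      have : x + t • -x = (1 - t) • x := by module
      simp only [this, mem_ofPred_eq, smul_dotProduct, dotProduct_smul, smul_eq_mul]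
      have hxx : 0 ≤ x ⬝ᵥ x := by simpa using dotProduct_self_star_nonneg x
      nlinarith [mul_nonneg (mul_nonneg ht0.le (by linarith : (0 : ℝ) ≤ 2 - t)) hxx]
    have := h hmem
    simp only [mem_ofPred_eq, quadraticModel_add_smul hH, dotProduct_neg, neg_dotProduct,
      mulVec_neg] at this
    nlinarith
  have := nonneg_of_eventually_nonneg_nhdsGT
    (f := fun t => -((g + H *ᵥ x) ⬝ᵥ x) + 1 / 2 * (x ⬝ᵥ H *ᵥ x) * t) (by fun_prop)
    (eventually_of_mem (Ioo_mem_nhdsGT one_pos) hinward)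
  linarith [show 0 ≤ -((g + H *ᵥ x) ⬝ᵥ x) by simpa using this]

theorem reflection_ineq_of_isMinOn_sphere [DecidableEq n] (hH : H.IsSymm) {x : n → ℝ}
    (h : IsMinOn (quadraticModel H g) {y | y ⬝ᵥ y = x ⬝ᵥ x} x) (lam : ℝ) (v : n → ℝ) :
    (v ⬝ᵥ x) * (v ⬝ᵥ v) * ((g + H *ᵥ x + lam • x) ⬝ᵥ v) ≤
      (v ⬝ᵥ x) ^ 2 * (v ⬝ᵥ (H + lam • 1) *ᵥ v) := by
  rcases eq_or_ne v 0 with rfl | hv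
  · simp
  have hvv : 0 < v ⬝ᵥ v := by simpa using dotProduct_self_star_pos_iff.2 hv
  set α := -2 * (v ⬝ᵥ x) / (v ⬝ᵥ v)
  have hα : α * (v ⬝ᵥ v) = -2 * (v ⬝ᵥ x) := div_mul_cancel₀ _ hvv.ne'
  have hmem : x + α • v ∈ {y | y ⬝ᵥ y = x ⬝ᵥ x} := by
    simp only [mem_ofPred_eq, dotProduct_add, add_dotProduct, smul_dotProduct, dotProduct_smul,
      smul_eq_mul, dotProduct_comm x v]
    linear_combination α * hα
  have hle := h hmem
  simp only [mem_ofPred_eq, quadraticModel_add_smul hH] at hle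
  set r := g + H *ᵥ x
  replace hle : 0 ≤ r ⬝ᵥ v * α + 1 / 2 * (v ⬝ᵥ H *ᵥ v) * α ^ 2 := by linarith
  have hscaled : (v ⬝ᵥ v) ^ 2 * (r ⬝ᵥ v * α + 1 / 2 * (v ⬝ᵥ H *ᵥ v) * α ^ 2) =
      2 * ((v ⬝ᵥ x) ^ 2 * (v ⬝ᵥ H *ᵥ v) - (v ⬝ᵥ x) * (v ⬝ᵥ v) * (r ⬝ᵥ v)) := by
    linear_combination
      (r ⬝ᵥ v * (v ⬝ᵥ v) + 1 / 2 * (v ⬝ᵥ H *ᵥ v) * (α * (v ⬝ᵥ v) - 2 * (v ⬝ᵥ x))) * hα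
  simp only [add_mulVec, smul_mulVec, one_mulVec, add_dotProduct, dotProduct_add,
    smul_dotProduct, dotProduct_smul, smul_eq_mul, dotProduct_comm x v]
  nlinarith [mul_nonneg (sq_nonneg (v ⬝ᵥ v)) hle]

theorem exists_multiplier_of_isMinOn_ball [DecidableEq n] (hH : H.IsSymm) {x : n → ℝ}
    (hx : x ≠ 0) (h : IsMinOn (quadraticModel H g) {y | y ⬝ᵥ y ≤ x ⬝ᵥ x} x) :
    ∃ lam : ℝ, 0 ≤ lam ∧ (H + lam • 1) *ᵥ x = -g ∧ (H + lam • 1).PosSemidef := by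
  have hxx : 0 < x ⬝ᵥ x := by simpa using dotProduct_self_star_pos_iff.2 hx
  set lam := -((g + H *ᵥ x) ⬝ᵥ x) / (x ⬝ᵥ x)
  have hlam : 0 ≤ lam :=
    div_nonneg (neg_nonneg.2 (gradient_dotProduct_nonpos_of_isMinOn hH h)) hxx.le
  have hrefl := reflection_ineq_of_isMinOn_sphere hH
    (h.on_subset fun y (hy : y ⬝ᵥ y = x ⬝ᵥ x) => hy.le) lam
  have hs : g + H *ᵥ x + lam • x = 0 := eq_zero_of_forall_mul_dotProduct_le hx (by
    simp only [add_dotProduct, smul_dotProduct, smul_eq_mul, lam]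
    field_simp
    ring) hrefl
  refine ⟨lam, hlam, ?_, posSemidef_of_forall_sq_dotProduct_mul_nonneg
    (hH.add (isSymm_one.smul lam)) hx fun v => by simpa [hs] using hrefl v⟩
  rw [add_mulVec, smul_mulVec, one_mulVec]
  linear_combination (norm := module) hs

end QuadraticModel

/-- Moré–Sorensen characterization: w* with ‖w*‖₂ ≤ Δ globally solves the
trust-region subproblem min_{‖w‖₂ ≤ Δ} gᵀw + ½wᵀHw (H symmetric) iff there is
λ ≥ 0 with (H + λI)w* = −g, H + λI PSD, and λ(Δ − ‖w*‖₂) = 0. -/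
theorem more_sorensen_characterization (D : ℕ)
    (H : Matrix (Fin D) (Fin D) ℝ) (hH : H.IsSymm)
    (g : Fin D → ℝ) (Δ : ℝ) (hΔ : 0 < Δ)
    (m : (Fin D → ℝ) → ℝ)
    (hm : m = fun w => g ⬝ᵥ w + (1/2) * (w ⬝ᵥ H.mulVec w))
    (wstar : Fin D → ℝ) (hw : Real.sqrt (∑ j, (wstar j)^2) ≤ Δ) :
    (∀ w, Real.sqrt (∑ j, (w j)^2) ≤ Δ → m wstar ≤ m w) ↔
    ∃ lam : ℝ, 0 ≤ lam ∧
      (H + lam • (1 : Matrix (Fin D) (Fin D) ℝ)).mulVec wstar = -g ∧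
      (H + lam • (1 : Matrix (Fin D) (Fin D) ℝ)).PosSemidef ∧
      lam * (Δ - Real.sqrt (∑ j, (wstar j)^2)) = 0 := by
  subst hm
  have hsum (w : Fin D → ℝ) : ∑ j, w j ^ 2 = w ⬝ᵥ w := by simp [dotProduct, sq]
  have hxx : 0 ≤ wstar ⬝ᵥ wstar := by simpa using dotProduct_self_star_nonneg wstar
  simp only [hsum, Real.sqrt_le_left hΔ.le] at hw ⊢
  change IsMinOn (quadraticModel H g) {w | w ⬝ᵥ w ≤ Δ ^ 2} wstar ↔ _
  constructor
  · intro hmin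
    rcases hw.lt_or_eq with hint | hbd
    · have hnhds : {w | w ⬝ᵥ w ≤ Δ ^ 2} ∈ 𝓝 wstar :=
        mem_of_superset ((isOpen_lt (f := fun w : Fin D → ℝ => w ⬝ᵥ w) (by fun_prop)
          continuous_const).mem_nhds hint)
          fun w (hlt : w ⬝ᵥ w < Δ ^ 2) => hlt.le
      obtain ⟨hstat, hpsd⟩ := (hmin.isLocalMin hnhds).stationary_posSemidef_of_quadraticModel hH
      exact ⟨0, le_rfl, by simpa using hstat, by simpa using hpsd, zero_mul _⟩
    · have hx : wstar ≠ 0 := by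
        rintro rfl
        simp only [dotProduct_zero] at hbd
        exact (pow_pos hΔ 2).ne hbd
      obtain ⟨lam, hlam, hstat, hpsd⟩ := exists_multiplier_of_isMinOn_ball hH hx (hbd ▸ hmin)
      refine ⟨lam, hlam, hstat, hpsd, ?_⟩
      rw [hbd, Real.sqrt_sq hΔ.le, sub_self, mul_zero]
  · rintro ⟨lam, hlam, hstat, hpsd, hcompl⟩
    refine isMinOn_quadraticModel_of_multiplier hH hlam hstat hpsd ?_
    linear_combination (Δ + √(wstar ⬝ᵥ wstar)) * hcompl + lam * Real.sq_sqrt hxx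
end
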